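/- arXiv:2401.06514 — 3 statements merged into one kernel-verified Lean document; each statement's English description precedes it below -/
import Mathlib

section
/- Let N and K be nonempty finite types (agents and representatives), and let Π be a nonempty type (policies), with V : N → Π → ℝ giving the expected value V i π of agent i under policy π. Suppose M : (N → K) → (K → Π) is a selection function such that for every assignment a : N → K and every j ∈ K, the policy M a j maximizes π ↦ ∑_{i : a i = j} V i π over Π, and suppose E : (K → Π) → (N → K) is a selection function such that for every policy profile p : K → Π and every i ∈ N, the index E p i maximizes j ↦ V i (p j) over K. Starting from any assignment a₀ : N → K, define a_{n+1} = E (M (a_n)). Then the sequence of social-welfare values W_n = SW(a_n, M (a_n)) = ∑_{i ∈ N} V i (M (a_n) (a_n i)) is monotone nondecreasing in n and is eventually constant (in particular, it converges). -/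
open Finset

private lemma fiber_sum {N K P : Type*} [Fintype N] [Fintype K] [DecidableEq K]
    (V : N → P → ℝ) (b : N → K) (p : K → P) :
    ∑ i : N, V i (p (b i)) = ∑ j : K, ∑ i ∈ univ.filter (fun i => b i = j), V i (p j) := by
  rw [← Finset.sum_fiberwise univ b (fun i => V i (p (b i)))]
  refine Finset.sum_congr rfl fun j _ => Finset.sum_congr rfl fun i hi => ?_
  simp only [mem_filter] at hi
  rw [hi.2]

/-- The EM-like algorithm: alternating M-steps (selection `M`) and E-steps (selection `E`)
starting from any assignment `a₀` produces a monotone nondecreasing, eventually constant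
sequence of social-welfare values. -/
theorem em_algorithm_welfare_monotone_eventually_constant
    {N K P : Type*} [Fintype N] [Fintype K] [Nonempty N] [Nonempty K] [DecidableEq K] [Nonempty P]
    (V : N → P → ℝ)
    (M : (N → K) → (K → P))
    (hM : ∀ (a : N → K) (j : K) (π : P),
      ∑ i ∈ univ.filter (fun i => a i = j), V i π
        ≤ ∑ i ∈ univ.filter (fun i => a i = j), V i (M a j))
    (E : (K → P) → (N → K))
    (hE : ∀ (p : K → P) (i : N) (j : K), V i (p j) ≤ V i (p (E p i)))
    (a₀ : N → K) (a : ℕ → N → K)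
    (ha0 : a 0 = a₀)
    (ha : ∀ n, a (n + 1) = E (M (a n)))
    (W : ℕ → ℝ)
    (hW : ∀ n, W n = ∑ i : N, V i (M (a n) (a n i))) :
    (∀ n, W n ≤ W (n + 1)) ∧ ∃ N₀ : ℕ, ∃ c : ℝ, ∀ n ≥ N₀, W n = c := by
  have mono : ∀ n, W n ≤ W (n + 1) := by
    intro n
    rw [hW n, hW (n + 1)]
    calc ∑ i : N, V i (M (a n) (a n i))
        ≤ ∑ i : N, V i (M (a n) (a (n + 1) i)) := by
          refine Finset.sum_le_sum fun i _ => ?_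
          rw [ha n]
          exact hE (M (a n)) i (a n i)
      _ = ∑ j : K, ∑ i ∈ univ.filter (fun i => a (n + 1) i = j),
            V i (M (a n) j) := fiber_sum V (a (n + 1)) (M (a n))
      _ ≤ ∑ j : K, ∑ i ∈ univ.filter (fun i => a (n + 1) i = j),
            V i (M (a (n + 1)) j) :=
          Finset.sum_le_sum fun j _ => hM (a (n + 1)) j (M (a n) j)
      _ = ∑ i : N, V i (M (a (n + 1)) (a (n + 1) i)) :=
          (fiber_sum V (a (n + 1)) (M (a (n + 1)))).symm
  refine ⟨mono, ?_⟩
  have monoLe : ∀ {m n : ℕ}, m ≤ n → W m ≤ W n := fun {m n} h =>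
    monotone_nat_of_le_succ mono h
  -- a is not injective since N → K is finite
  obtain ⟨m, m', hne, heq⟩ := Finite.exists_ne_map_eq_of_infinite a
  wlog hlt : m < m' generalizing m m'
  · exact this m' m hne.symm heq.symm (by omega)
  set d := m' - m with hd
  have hd1 : 1 ≤ d := by omega
  -- periodicity of a after m
  have hper : ∀ t, a (m + t + d) = a (m + t) := by
    intro t
    induction t with
    | zero => simpa [hd, Nat.add_sub_cancel' (le_of_lt hlt)] using heq.symm
    | succ t ih =>
        have : m + (t + 1) + d = (m + t + d) + 1 := by omega
        rw [this, ha, ih, ← ha]; congr 1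
  -- W is periodic after m
  have hWper : ∀ t, W (m + t + d) = W (m + t) := by
    intro t; rw [hW, hW, hper t]
  -- hence W (m + k * d) = W m
  have hWk : ∀ k, W (m + k * d) = W m := by
    intro k
    induction k with
    | zero => simp
    | succ k ih =>
        have : m + (k + 1) * d = m + k * d + d := by ring
        rw [this, hWper (k * d), ih]
  refine ⟨m, W m, fun n hn => ?_⟩
  have h1 : W m ≤ W n := monoLe hn
  have h2 : n ≤ m + n * d := by nlinarith
  have h3 : W n ≤ W m := (hWk n ▸ monoLe h2)
  linarith
end

section
/- Let N and K be nonempty finite types, let Π be a nonempty type, and let V : N → Π → ℝ. Let a : N → K be a hard assignment and p : K → Π a policy profile. Suppose p' : K → Π satisfies, for every j ∈ K, that p' j maximizes π ↦ ∑_{i : a i = j} V i π over Π (M-step), and a' : N → K satisfies, for every i ∈ N, that a' i maximizes j ↦ V i (p' j) over K (E-step). Then SW(a', p') ≥ SW(a, p') ≥ SW(a, p), where SW(b, q) = ∑_{i ∈ N} V i (q (b i)). -/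
open Finset

/-- One full EM iteration (an M-step followed by an E-step) does not decrease
utilitarian social welfare `SW(a, p) = ∑ i, V i (p (a i))`. -/
theorem em_iteration_monotone
    {N K P : Type*} [Fintype N] [Fintype K] [Nonempty N] [Nonempty K] [DecidableEq K] [Nonempty P]
    (V : N → P → ℝ)
    (a : N → K) (p : K → P) (p' : K → P) (a' : N → K)
    (hM : ∀ (j : K) (π : P),
      ∑ i ∈ univ.filter (fun i => a i = j), V i π
        ≤ ∑ i ∈ univ.filter (fun i => a i = j), V i (p' j))
    (hE : ∀ (i : N) (j : K), V i (p' j) ≤ V i (p' (a' i))) :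
    (∑ i : N, V i (p' (a i)) ≤ ∑ i : N, V i (p' (a' i))) ∧
    (∑ i : N, V i (p (a i)) ≤ ∑ i : N, V i (p' (a i))) := by
  constructor
  · exact Finset.sum_le_sum fun i _ => hE i (a i)
  · have h1 : ∀ f : N → ℝ, ∑ i : N, f i
        = ∑ j : K, ∑ i ∈ univ.filter (fun i => a i = j), f i := by
      intro f
      rw [← Finset.sum_fiberwise (s := univ) (g := a) (f := f)]
    rw [h1 (fun i => V i (p (a i))), h1 (fun i => V i (p' (a i)))]
    apply Finset.sum_le_sum
    intro j _
    calc ∑ i ∈ univ.filter (fun i => a i = j), V i (p (a i))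
        = ∑ i ∈ univ.filter (fun i => a i = j), V i (p j) := by
          apply Finset.sum_congr rfl; intro i hi
          simp only [mem_filter] at hi; rw [hi.2]
      _ ≤ ∑ i ∈ univ.filter (fun i => a i = j), V i (p' j) := hM j (p j)
      _ = ∑ i ∈ univ.filter (fun i => a i = j), V i (p' (a i)) := by
          apply Finset.sum_congr rfl; intro i hi
          simp only [mem_filter] at hi; rw [hi.2]
end

section
/- Let N and K be nonempty finite types, let Π be a nonempty type, and let V : N → Π → ℝ. Suppose the pair (a, p*) with a : N → K and p* : K → Π is an EM fixed point, i.e., for every j ∈ K, p* j maximizes π ↦ ∑_{i : a i = j} V i π over Π, and for every i ∈ N, a i maximizes j ↦ V i (p* j) over K. Then (a, p*) is a coordinate-wise local maximum of social welfare: SW(a, p*) ≥ SW(a', p*) for every assignment a' : N → K, and SW(a, p*) ≥ SW(a, p) for every policy profile p : K → Π, where SW(b, q) = ∑_{i ∈ N} V i (q (b i)). -/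
open Finset

/-- An EM fixed point `(a, p*)` is a coordinate-wise local maximum of social welfare:
no change of the assignments alone, nor of the policies alone, can improve
`SW(b, q) = ∑ i, V i (q (b i))`. -/
theorem em_fixed_point_is_coordinatewise_local_max
    {N K P : Type*} [Fintype N] [Fintype K] [Nonempty N] [Nonempty K] [DecidableEq K] [Nonempty P]
    (V : N → P → ℝ)
    (a : N → K) (pstar : K → P)
    (hM : ∀ (j : K) (π : P),
      ∑ i ∈ univ.filter (fun i => a i = j), V i π
        ≤ ∑ i ∈ univ.filter (fun i => a i = j), V i (pstar j))
    (hE : ∀ (i : N) (j : K), V i (pstar j) ≤ V i (pstar (a i))) :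
    (∀ a' : N → K, ∑ i : N, V i (pstar (a' i)) ≤ ∑ i : N, V i (pstar (a i))) ∧
    (∀ p : K → P, ∑ i : N, V i (p (a i)) ≤ ∑ i : N, V i (pstar (a i))) := by
  constructor
  · intro a'
    exact Finset.sum_le_sum fun i _ => hE i (a' i)
  · intro p
    have key : ∀ q : K → P, ∑ i : N, V i (q (a i))
        = ∑ j : K, ∑ i ∈ univ.filter (fun i => a i = j), V i (q (a i)) := by
      intro q
      exact (Finset.sum_fiberwise_of_maps_to (fun i _ => mem_univ (a i)) _).symm
    rw [key p, key pstar]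
    refine Finset.sum_le_sum fun j _ => ?_
    calc ∑ i ∈ univ.filter (fun i => a i = j), V i (p (a i))
        = ∑ i ∈ univ.filter (fun i => a i = j), V i (p j) := by
          refine Finset.sum_congr rfl fun i hi => ?_
          rw [(mem_filter.mp hi).2]
      _ ≤ ∑ i ∈ univ.filter (fun i => a i = j), V i (pstar j) := hM j (p j)
      _ = ∑ i ∈ univ.filter (fun i => a i = j), V i (pstar (a i)) := by
          refine Finset.sum_congr rfl fun i hi => ?_
          rw [(mem_filter.mp hi).2]
end
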